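/- For every real α > 0, one has ∫_0^∞ erfc(α·(w + w^{−1})) dw/w = Γ(0, 4α²), the integral converging absolutely, where Γ(0,x) := ∫_x^∞ e^{−t}·t^{−1} dt. -/

import Mathlib

/-!
Substituting `w = eˢ` turns the integral into `∫_ℝ erfc(2α cosh s) ds`. Rescaling the variable of
the Gaussian tail by `cosh s` gives `erfc(2α cosh s) = (2/√π) ∫_{2α}^∞ cosh s · e^{-(r cosh s)²} dr`,
and since `cosh² s = 1 + sinh² s` the substitution `u = sinh s` evaluates the `s`-integral of this
positive integrand as `e^{-r²} √π / r`. This finiteness is what justifies Fubini, and exchanging the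
integrals leaves `∫_{2α}^∞ 2 e^{-r²} dr / r`, which is `Γ(0, 4α²)` after `t = r²`.
-/

open MeasureTheory Filter Set

noncomputable section

/-- The complementary error function `erfc(x) = (2/√π)∫_x^∞ e^{-r²} dr`. -/
def erfc (x : ℝ) : ℝ := (2 / Real.sqrt Real.pi) * ∫ r in Set.Ioi x, Real.exp (-(r ^ 2))

/-- The incomplete Gamma function at `s = 0`: `Γ(0,x) = ∫_x^∞ e^{-t}·t⁻¹ dt`. -/
def Gamma0 (x : ℝ) : ℝ := ∫ t in Set.Ioi x, Real.exp (-t) / t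

open Real

section ChangeOfVariables

variable {E : Type*} [NormedAddCommGroup E] [NormedSpace ℝ E]

theorem integrable_exp_smul_comp_exp_iff (g : ℝ → E) :
    Integrable (fun s => exp s • g (exp s)) ↔ IntegrableOn g (Ioi 0) := by
  simpa [range_exp] using
    (integrableOn_image_iff_integrableOn_abs_deriv_smul MeasurableSet.univ
      (fun x _ => (hasDerivAt_exp x).hasDerivWithinAt) exp_injective.injOn g).symm

theorem integral_exp_smul_comp_exp (g : ℝ → E) :
    ∫ s, exp s • g (exp s) = ∫ x in Ioi 0, g x := by
  simpa [range_exp] using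
    (integral_image_eq_integral_abs_deriv_smul MeasurableSet.univ
      (fun x _ => (hasDerivAt_exp x).hasDerivWithinAt) exp_injective.injOn g).symm

theorem integrable_cosh_smul_comp_sinh_iff (g : ℝ → E) :
    Integrable (fun s => cosh s • g (sinh s)) ↔ Integrable g := by
  simpa [sinh_surjective.range_eq, abs_of_pos (cosh_pos _)] using
    (integrableOn_image_iff_integrableOn_abs_deriv_smul MeasurableSet.univ
      (fun x _ => (hasDerivAt_sinh x).hasDerivWithinAt) sinh_injective.injOn g).symm

theorem integral_cosh_smul_comp_sinh (g : ℝ → E) :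
    ∫ s, cosh s • g (sinh s) = ∫ x, g x := by
  simpa [sinh_surjective.range_eq, abs_of_pos (cosh_pos _)] using
    (integral_image_eq_integral_abs_deriv_smul MeasurableSet.univ
      (fun x _ => (hasDerivAt_sinh x).hasDerivWithinAt) sinh_injective.injOn g).symm

end ChangeOfVariables

theorem Gamma0_sq {c : ℝ} (hc : 0 ≤ c) :
    Gamma0 (c ^ 2) = ∫ r in Ioi c, 2 * exp (-r ^ 2) / r := by
  have h := integral_comp_rpow_Ioi_of_pos' (g := fun t => exp (-t) / t) two_pos (sq_nonneg c)
  rw [show (c ^ 2) ^ (2 : ℝ)⁻¹ = c by rw [inv_eq_one_div, ← sqrt_eq_rpow, sqrt_sq hc]] at h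
  rw [Gamma0, ← h]
  refine setIntegral_congr_fun measurableSet_Ioi fun r hcr => ?_
  have hr : 0 < r := hc.trans_lt hcr
  norm_num [rpow_two]
  field_simp

theorem erfc_mul {t : ℝ} (ht : 0 < t) (x : ℝ) :
    erfc (t * x) = 2 / √π * ∫ r in Ioi x, t * exp (-(t * r) ^ 2) := by
  rw [integral_const_mul, integral_comp_mul_left_Ioi (fun r => exp (-r ^ 2)) x ht, smul_eq_mul,
    mul_inv_cancel_left₀ ht.ne', erfc]

theorem cosh_mul_exp_neg_sq_cosh_mul (r s : ℝ) :
    cosh s * exp (-(cosh s * r) ^ 2) = cosh s • (exp (-r ^ 2) * exp (-(r ^ 2) * sinh s ^ 2)) := by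
  rw [smul_eq_mul, ← exp_add, mul_pow, cosh_sq]
  ring_nf

-- At `r = 0` both sides are the junk value `0`.
theorem integral_cosh_mul_exp_neg_sq_cosh_mul (r : ℝ) :
    ∫ s, cosh s * exp (-(cosh s * r) ^ 2) = exp (-r ^ 2) * √(π / r ^ 2) := by
  simp_rw [cosh_mul_exp_neg_sq_cosh_mul r]
  rw [integral_cosh_smul_comp_sinh (fun x => exp (-r ^ 2) * exp (-(r ^ 2) * x ^ 2)),
    integral_const_mul, integral_gaussian]

theorem integrable_cosh_mul_exp_neg_sq_cosh_mul {r : ℝ} (hr : r ≠ 0) :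
    Integrable fun s => cosh s * exp (-(cosh s * r) ^ 2) := by
  simp_rw [cosh_mul_exp_neg_sq_cosh_mul r]
  rw [integrable_cosh_smul_comp_sinh_iff (fun x => exp (-r ^ 2) * exp (-(r ^ 2) * x ^ 2))]
  exact (integrable_exp_neg_mul_sq (by positivity)).const_mul _

theorem integrable_prod_cosh_mul_exp_neg_sq_cosh_mul {c : ℝ} (hc : 0 < c) :
    Integrable (fun p : ℝ × ℝ => cosh p.1 * exp (-(cosh p.1 * p.2) ^ 2))
      (volume.prod (volume.restrict (Ioi c))) := by
  refine (integrable_prod_iff' (by fun_prop)).2 ⟨?_, ?_⟩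
  · exact (ae_restrict_iff' measurableSet_Ioi).2 <| .of_forall fun r hr =>
      integrable_cosh_mul_exp_neg_sq_cosh_mul (hc.trans hr).ne'
  · have hnorm (r : ℝ) : ∫ s, ‖cosh s * exp (-(cosh s * r) ^ 2)‖ = exp (-r ^ 2) * √(π / r ^ 2) := by
      rw [← integral_cosh_mul_exp_neg_sq_cosh_mul]
      exact integral_congr_ae <| .of_forall fun s => norm_of_nonneg (by positivity)
    simp_rw [hnorm]
    refine ((integrable_exp_neg_mul_sq one_pos).const_mul (√π / c)).integrableOn.mono'
      (by fun_prop) ((ae_restrict_iff' measurableSet_Ioi).2 <| .of_forall fun r hcr => ?_)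
    have hr : 0 < r := hc.trans hcr
    rw [norm_of_nonneg (by positivity), sqrt_div' _ (sq_nonneg r), sqrt_sq hr.le, neg_one_mul,
      mul_comm]
    gcongr
    exact hcr.le

/-- `∫_0^∞ erfc(α(w+w⁻¹)) dw/w = Γ(0,4α²)` for `α > 0`, the integral
converging absolutely. -/
theorem stmt10 (α : ℝ) (hα : 0 < α) :
    IntegrableOn (fun w : ℝ => erfc (α * (w + w⁻¹)) / w) (Set.Ioi 0) ∧
    (∫ w in Set.Ioi (0 : ℝ), erfc (α * (w + w⁻¹)) / w) = Gamma0 (4 * α ^ 2) := by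
  have hc : 0 < 2 * α := by positivity
  have hF := integrable_prod_cosh_mul_exp_neg_sq_cosh_mul hc
  have hsubst (s : ℝ) : exp s • (erfc (α * (exp s + (exp s)⁻¹)) / exp s)
      = 2 / √π * ∫ r in Ioi (2 * α), cosh s * exp (-(cosh s * r) ^ 2) := by
    rw [smul_eq_mul, mul_div_cancel₀ _ (exp_pos s).ne', ← exp_neg,
      show α * (exp s + exp (-s)) = cosh s * (2 * α) by rw [cosh_eq]; ring, erfc_mul (cosh_pos s)]
  refine ⟨?_, ?_⟩
  · rw [← integrable_exp_smul_comp_exp_iff, funext hsubst]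
    exact hF.integral_prod_left.const_mul _
  · rw [← integral_exp_smul_comp_exp, funext hsubst, integral_const_mul,
      integral_integral_swap hF, show 4 * α ^ 2 = (2 * α) ^ 2 by ring, Gamma0_sq hc.le,
      ← integral_const_mul]
    refine setIntegral_congr_fun measurableSet_Ioi fun r hcr => ?_
    have hr : 0 < r := hc.trans hcr
    rw [integral_cosh_mul_exp_neg_sq_cosh_mul, sqrt_div' _ (sq_nonneg r), sqrt_sq hr.le]
    field_simp

end
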